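/- arXiv:1601.08025 — 2 statements merged into one kernel-verified Lean document; each statement's English description precedes it below -/
import Mathlib

section
/- There exists a constant Δ_d ∈ [1, ∞), depending only on d, with the following property: whenever K ⊂ ℝ^d is a compact convex set satisfying [0, Δ_d]^d ⊆ K ⊆ [0, M]^d for some M ≥ Δ_d, then for every t > 0, {z ∈ [0, 1/2]^d : v_K(z) = t} = {z ∈ [0, 1/2]^d : ∏_{i=1}^d z_i = (d!/d^d)·t}. That is, near the origin the level sets of v_K are pseudo-hyperboloids. -/
/-!
Since `K` lies in the positive orthant, the half-space through `z` whose boundary has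
intercepts `d • z` meets `K` inside a simplex of volume `dᵈ ∏ zᵢ / d!`. Conversely, move the
boundary of any half-space `H` containing `z` onto `z`. If its inward normal `u` is positive and
all intercepts are at most `Δ = d ^ (2d)`, then `H` cuts from the cube `[0, Δ]ᵈ ⊆ K` a corner
simplex with `z` on its facet, and AM-GM bounds its volume below by `dᵈ ∏ zᵢ / d!`. Otherwise
`H ∩ [0, Δ]ᵈ` contains a box with side `Δ / d` in one direction and sides `zᵢ / d` in the others,
which is larger still. Points with a zero coordinate lie on a supporting hyperplane of `K`, where
`v_K` vanishes.
-/

/-- The function `v_K(z)`: the infimum of `Vol(K ∩ H)` over all closed half-spaces `H`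
containing `z`. A closed half-space is `{w : ∑ i, u i * w i ≤ c}` with `u ≠ 0`, and it
contains `z` iff `∑ i, u i * z i ≤ c`. -/
noncomputable def floatVal (d : ℕ) (K : Set (Fin d → ℝ)) (z : Fin d → ℝ) : ENNReal :=
  ⨅ (u : Fin d → ℝ) (_ : u ≠ 0) (c : ℝ) (_ : ∑ i, u i * z i ≤ c),
    MeasureTheory.volume (K ∩ {w : Fin d → ℝ | ∑ i, u i * w i ≤ c})

open MeasureTheory Finset
open scoped Nat

lemma prod_le_pow_sum_div_card {ι : Type*} (s : Finset ι) (x : ι → ℝ) (hx : ∀ i ∈ s, 0 ≤ x i) :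
    ∏ i ∈ s, x i ≤ ((∑ i ∈ s, x i) / #s) ^ #s := by
  rcases s.eq_empty_or_nonempty with rfl | hs
  · simp
  have hcard : (0 : ℝ) < #s := by exact_mod_cast hs.card_pos
  have hamgm := Real.geom_mean_le_arith_mean s (fun _ => 1) x (fun _ _ => zero_le_one)
    (by simpa using hcard) hx
  simp only [Real.rpow_one, one_mul, sum_const, nsmul_eq_mul, mul_one] at hamgm
  calc ∏ i ∈ s, x i = ((∏ i ∈ s, x i) ^ ((#s : ℝ)⁻¹)) ^ #s :=
        (Real.rpow_inv_natCast_pow (prod_nonneg hx) hs.card_pos.ne').symm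
    _ ≤ _ := pow_le_pow_left₀ (Real.rpow_nonneg (prod_nonneg hx) _) hamgm _

def cornerSimplex (n : ℕ) (c : ℝ) : Set (Fin n → ℝ) :=
  {w | (∀ i, 0 ≤ w i) ∧ ∑ i, w i ≤ c}

lemma measurableSet_cornerSimplex (n : ℕ) (c : ℝ) : MeasurableSet (cornerSimplex n c) := by
  simp only [cornerSimplex, Set.ofPred_and, Set.ofPred_forall]
  exact (MeasurableSet.iInter fun i =>
    measurableSet_le measurable_const (measurable_pi_apply i)).inter
      (measurableSet_le (by fun_prop) measurable_const)

lemma cons_mem_cornerSimplex_iff {n : ℕ} {c x : ℝ} {y : Fin n → ℝ} :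
    (Fin.cons x y : Fin (n + 1) → ℝ) ∈ cornerSimplex (n + 1) c ↔
      0 ≤ x ∧ y ∈ cornerSimplex n (c - x) := by
  simp [cornerSimplex, Fin.forall_fin_succ, Fin.sum_cons, le_sub_iff_add_le', and_assoc]

lemma volume_eq_lintegral_volume_cons {n : ℕ} {S : Set (Fin (n + 1) → ℝ)}
    (hS : MeasurableSet S) :
    volume S = ∫⁻ x, volume {y : Fin n → ℝ | Fin.cons x y ∈ S} := by
  have hpres := (volume_preserving_piFinSuccAbove (fun _ : Fin (n + 1) => ℝ) 0).symm
  rw [← hpres.measure_preimage hS.nullMeasurableSet, Measure.volume_eq_prod,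
    Measure.prod_apply (hpres.measurable hS)]
  congr! with x y
  simp [MeasurableEquiv.piFinSuccAbove, Fin.insertNthEquiv, Fin.insertNth_zero']
  rfl

lemma volume_cornerSimplex (n : ℕ) {c : ℝ} (hc : 0 ≤ c) :
    volume (cornerSimplex n c) = ENNReal.ofReal (c ^ n / n !) := by
  induction n generalizing c with
  | zero =>
    have : cornerSimplex 0 c = Set.univ := by ext; simp [cornerSimplex, hc]
    simp [this, volume_pi]
  | succ n ih =>
    have hslice (x : ℝ) : volume {y | Fin.cons x y ∈ cornerSimplex (n + 1) c} =
        (Set.Icc 0 c).indicator (fun x => ENNReal.ofReal ((c - x) ^ n / n !)) x := by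
      simp_rw [cons_mem_cornerSimplex_iff]
      by_cases hx : x ∈ Set.Icc 0 c
      · rw [Set.indicator_of_mem hx, ← ih (sub_nonneg.2 hx.2)]
        simp [hx.1]
      · rw [Set.indicator_of_notMem hx]
        have : {y | 0 ≤ x ∧ y ∈ cornerSimplex n (c - x)} = ∅ :=
          Set.eq_empty_of_forall_notMem fun y ⟨hx0, hy0, hsum⟩ =>
            hx ⟨hx0, by linarith [sum_nonneg fun i (_ : i ∈ univ) => hy0 i]⟩
        rw [this, measure_empty]
    have hint : ∫ x in Set.Icc 0 c, (c - x) ^ n / n ! = c ^ (n + 1) / (n + 1)! := by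
      rw [integral_Icc_eq_integral_Ioc, ← intervalIntegral.integral_of_le hc,
        intervalIntegral.integral_div, intervalIntegral.integral_comp_sub_left (fun x => x ^ n),
        integral_pow, Nat.factorial_succ]
      push_cast
      field_simp
      ring
    rw [volume_eq_lintegral_volume_cons (measurableSet_cornerSimplex _ _)]
    simp_rw [hslice]
    rw [lintegral_indicator measurableSet_Icc, ← hint, ofReal_integral_eq_lintegral_ofReal
      (Continuous.integrableOn_Icc (by fun_prop))]
    filter_upwards [ae_restrict_mem measurableSet_Icc] with x hx
    have : 0 ≤ c - x := sub_nonneg.2 hx.2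
    positivity

lemma volume_orthant_inter_halfSpace {n : ℕ} {u : Fin n → ℝ} (hu : ∀ i, 0 < u i) {s : ℝ}
    (hs : 0 ≤ s) :
    volume {w : Fin n → ℝ | (∀ i, 0 ≤ w i) ∧ ∑ i, u i * w i ≤ s} =
      ENNReal.ofReal (s ^ n / (n ! * ∏ i, u i)) := by
  set f := Matrix.toLin' (Matrix.diagonal u)
  have hf (w : Fin n → ℝ) (i : Fin n) : f w i = u i * w i := by
    simp [f, Matrix.mulVec_diagonal]
  have hdet : LinearMap.det f = ∏ i, u i := by simp [f, LinearMap.det_toLin']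
  have hprod : 0 < ∏ i, u i := prod_pos fun i _ => hu i
  have hpre : {w : Fin n → ℝ | (∀ i, 0 ≤ w i) ∧ ∑ i, u i * w i ≤ s} =
      f ⁻¹' cornerSimplex n s := by
    ext w
    simp only [Set.mem_preimage, cornerSimplex, Set.mem_ofPred_eq, hf]
    exact and_congr_left' (forall_congr' fun i => (mul_nonneg_iff_of_pos_left (hu i)).symm)
  rw [hpre, Measure.addHaar_preimage_linearMap _ (hdet ▸ hprod.ne'), volume_cornerSimplex n hs,
    hdet, ← ENNReal.ofReal_mul (abs_nonneg _), abs_of_pos (inv_pos.2 hprod)]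
  congr 1
  field_simp

lemma ofReal_le_volume_orthant_inter_halfSpace {d : ℕ} {u z : Fin d → ℝ} (hu : ∀ i, 0 < u i)
    (hz : ∀ i, 0 ≤ z i) :
    ENNReal.ofReal ((d : ℝ) ^ d / d ! * ∏ i, z i) ≤
      volume {w : Fin d → ℝ | (∀ i, 0 ≤ w i) ∧ ∑ i, u i * w i ≤ ∑ i, u i * z i} := by
  have huz (i : Fin d) : 0 ≤ u i * z i := mul_nonneg (hu i).le (hz i)
  have hprod : 0 < ∏ i, u i := prod_pos fun i _ => hu i
  set s := ∑ i, u i * z i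
  have hamgm : (d : ℝ) ^ d * ((∏ i, u i) * ∏ i, z i) ≤ s ^ d := by
    rcases Nat.eq_zero_or_pos d with rfl | hd
    · simp
    have := prod_le_pow_sum_div_card univ (fun i => u i * z i) fun i _ => huz i
    rw [card_univ, Fintype.card_fin, prod_mul_distrib] at this
    calc (d : ℝ) ^ d * ((∏ i, u i) * ∏ i, z i) ≤ (d : ℝ) ^ d * (s / d) ^ d := by gcongr
      _ = s ^ d := by rw [← mul_pow, mul_div_cancel₀ _ (by positivity)]
  rw [volume_orthant_inter_halfSpace hu (sum_nonneg fun i _ => huz i)]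
  refine ENNReal.ofReal_le_ofReal ?_
  rw [div_mul_eq_mul_div, div_le_div_iff₀ (by positivity) (by positivity)]
  calc _ = (d : ℝ) ^ d * ((∏ i, u i) * ∏ i, z i) * d ! := by ring
    _ ≤ s ^ d * d ! := by gcongr

lemma floatVal_le_volume {d : ℕ} (K : Set (Fin d → ℝ)) {z u : Fin d → ℝ} (hu : u ≠ 0) {c : ℝ}
    (hc : ∑ i, u i * z i ≤ c) :
    floatVal d K z ≤ volume (K ∩ {w | ∑ i, u i * w i ≤ c}) :=
  iInf₂_le_of_le u hu (iInf₂_le_of_le c hc le_rfl)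

lemma floatVal_le_of_subset_orthant {d : ℕ} (hd : 0 < d) {K : Set (Fin d → ℝ)}
    (hK : ∀ w ∈ K, ∀ i, 0 ≤ w i) {z : Fin d → ℝ} (hz : ∀ i, 0 < z i) :
    floatVal d K z ≤ ENNReal.ofReal ((d : ℝ) ^ d / d ! * ∏ i, z i) := by
  have hu : (fun i => (z i)⁻¹) ≠ 0 := fun h => (inv_pos.2 (hz ⟨0, hd⟩)).ne' (congrFun h _)
  have hc : ∑ i, (z i)⁻¹ * z i = d := by simp [fun i => inv_mul_cancel₀ (hz i).ne']
  have hprod : 0 < ∏ i, z i := prod_pos fun i _ => hz i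
  calc floatVal d K z ≤ volume (K ∩ {w | ∑ i, (z i)⁻¹ * w i ≤ d}) :=
        floatVal_le_volume K hu hc.le
    _ ≤ volume {w : Fin d → ℝ | (∀ i, 0 ≤ w i) ∧ ∑ i, (z i)⁻¹ * w i ≤ d} :=
        measure_mono fun w hw => ⟨hK w hw.1, hw.2⟩
    _ = ENNReal.ofReal ((d : ℝ) ^ d / d ! * ∏ i, z i) := by
        rw [volume_orthant_inter_halfSpace (fun i => inv_pos.2 (hz i)) (Nat.cast_nonneg d),
          prod_inv_distrib]
        congr 1
        field_simp

lemma floatVal_eq_zero_of_apply_eq_zero {d : ℕ} {K : Set (Fin d → ℝ)} {z : Fin d → ℝ} {i : Fin d}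
    (hK : ∀ w ∈ K, 0 ≤ w i) (hz : z i = 0) : floatVal d K z = 0 := by
  have hsingle (w : Fin d → ℝ) : ∑ j, (Pi.single i 1 : Fin d → ℝ) j * w j = w i := by
    simp [Pi.single_apply]
  have hu : (Pi.single i 1 : Fin d → ℝ) ≠ 0 := by simp
  refine nonpos_iff_eq_zero.1 ((floatVal_le_volume K hu (c := 0) (by rw [hsingle, hz])).trans ?_)
  refine (measure_mono_null (fun w hw => ?_) (Measure.pi_hyperplane _ i 0)).le
  simp only [hsingle, Set.mem_ofPred_eq, Set.mem_inter_iff] at hw ⊢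
  exact le_antisymm hw.2 (hK w hw.1)

def cubeSide (d : ℕ) : ℝ := (d : ℝ) ^ (2 * d)

lemma one_le_cubeSide {d : ℕ} (hd : 1 ≤ d) : 1 ≤ cubeSide d :=
  one_le_pow₀ (by exact_mod_cast hd)

noncomputable def boxSide (d : ℕ) (z : Fin d → ℝ) (k : Fin d) : Fin d → ℝ :=
  fun i => Function.update z k (cubeSide d) i / d

section boxSide

variable {d : ℕ} {z : Fin d → ℝ} {k : Fin d}

lemma boxSide_nonneg (hz : ∀ i, 0 ≤ z i) (i : Fin d) : 0 ≤ boxSide d z k i := by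
  have : 0 ≤ cubeSide d := pow_nonneg (Nat.cast_nonneg d) _
  unfold boxSide
  rcases eq_or_ne i k with rfl | hik
  · simp only [Function.update_self]; positivity
  · simp only [Function.update_of_ne hik]; exact div_nonneg (hz i) (Nat.cast_nonneg d)

lemma boxSide_le_half_cubeSide (hd : 2 ≤ d) (hz : ∀ i, z i ≤ 1) (i : Fin d) :
    boxSide d z k i ≤ cubeSide d / 2 := by
  have hupdate : Function.update z k (cubeSide d) i ≤ cubeSide d := by
    rcases eq_or_ne i k with rfl | hik
    · simp
    · simpa [Function.update_of_ne hik] using (hz i).trans (one_le_cubeSide (by omega))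
  have hd2 : (2 : ℝ) ≤ d := by exact_mod_cast hd
  have : 0 ≤ cubeSide d := pow_nonneg (Nat.cast_nonneg d) _
  rw [boxSide, div_le_div_iff₀ (by positivity) two_pos]
  nlinarith

lemma ofReal_le_volume_of_box_subset (hz0 : ∀ i, 0 ≤ z i) (hz1 : ∀ i, z i ≤ 1) (a : Fin d → ℝ)
    {S : Set (Fin d → ℝ)} (hS : Set.Icc a (a + boxSide d z k) ⊆ S) :
    ENNReal.ofReal ((d : ℝ) ^ d / d ! * ∏ i, z i) ≤ volume S := by
  refine le_trans ?_ (measure_mono hS)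
  simp only [Real.volume_Icc_pi, Pi.add_apply, add_sub_cancel_left]
  rw [← ENNReal.ofReal_prod_of_nonneg fun i _ => boxSide_nonneg hz0 i]
  refine ENNReal.ofReal_le_ofReal ?_
  have hd : (0 : ℝ) < d := by exact_mod_cast k.pos
  have hP : 0 ≤ ∏ i ∈ univ \ {k}, z i := prod_nonneg fun i _ => hz0 i
  have hfac : (1 : ℝ) ≤ d ! := by exact_mod_cast Nat.one_le_iff_ne_zero.2 (Nat.factorial_ne_zero d)
  unfold boxSide
  rw [prod_div_distrib, prod_update_of_mem (mem_univ k), prod_const, card_univ,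
    Fintype.card_fin, prod_eq_mul_prod_sdiff_singleton_of_mem (mem_univ k), cubeSide]
  calc (d : ℝ) ^ d / d ! * (z k * ∏ i ∈ univ \ {k}, z i)
      ≤ (d : ℝ) ^ d * (1 * ∏ i ∈ univ \ {k}, z i) := by
        refine mul_le_mul (div_le_self (by positivity) hfac)
          (mul_le_mul_of_nonneg_right (hz1 k) hP) (mul_nonneg (hz0 k) hP) (by positivity)
    _ = _ := by
        field_simp
        ring

end boxSide

section halfSpace

variable {d : ℕ} {z u : Fin d → ℝ}

lemma orthant_inter_halfSpace_subset_cube (hu : ∀ i, 0 < u i)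
    (hsmall : ∀ i, ∑ j, u j * z j ≤ cubeSide d * u i) :
    {w : Fin d → ℝ | (∀ i, 0 ≤ w i) ∧ ∑ i, u i * w i ≤ ∑ i, u i * z i} ⊆
      Set.Icc 0 (fun _ => cubeSide d) ∩ {w | ∑ i, u i * w i ≤ ∑ i, u i * z i} := by
  rintro w ⟨hw0, hw⟩
  refine ⟨⟨hw0, fun i => ?_⟩, hw⟩
  have hi : u i * w i ≤ ∑ j, u j * w j :=
    single_le_sum (f := fun j => u j * w j) (fun j _ => mul_nonneg (hu j).le (hw0 j)) (mem_univ i)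
  have := hi.trans (hw.trans (hsmall i))
  rw [mul_comm (cubeSide d)] at this
  exact le_of_mul_le_mul_left this (hu i)

lemma box_subset_cube_inter_halfSpace_of_nonpos (hd : 2 ≤ d) (hz0 : ∀ i, 0 ≤ z i)
    (hz1 : ∀ i, z i ≤ 1 / 2) {k : Fin d} (hk : u k ≤ 0) :
    Set.Icc (fun i => if 0 < u i then 0 else z i)
        ((fun i => if 0 < u i then 0 else z i) + boxSide d z k) ⊆
      Set.Icc 0 (fun _ => cubeSide d) ∩ {w | ∑ i, u i * w i ≤ ∑ i, u i * z i} := by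
  have hz1' (i : Fin d) : z i ≤ 1 := (hz1 i).trans (by norm_num)
  have hΔ := one_le_cubeSide (d := d) (by omega)
  -- The box starts at `z` where `u ≤ 0` and at the origin where `u > 0`, so that
  -- `u i * w i ≤ u i * z i` holds coordinatewise on it.
  rintro w ⟨hlo, hhi⟩
  refine ⟨⟨fun i => le_trans ?_ (hlo i), fun i => (hhi i).trans ?_⟩, ?_⟩
  · dsimp only
    split_ifs
    exacts [le_rfl, hz0 i]
  · have := boxSide_le_half_cubeSide (k := k) hd hz1' i
    simp only [Pi.add_apply]
    split_ifs <;> linarith [hz1 i]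
  · change ∑ i, u i * w i ≤ ∑ i, u i * z i
    refine sum_le_sum fun i _ => ?_
    by_cases hui : 0 < u i
    · have hik : i ≠ k := fun h => (h ▸ hk).not_gt hui
      have hwi : w i ≤ z i := by
        have := hhi i
        simp only [Pi.add_apply, if_pos hui, zero_add, boxSide, Function.update_of_ne hik] at this
        exact this.trans (div_le_self (hz0 i) (by exact_mod_cast (by omega : 1 ≤ d)))
      exact mul_le_mul_of_nonneg_left hwi hui.le
    · have hwi : z i ≤ w i := by simpa [if_neg hui] using hlo i
      exact mul_le_mul_of_nonpos_left hwi (not_lt.1 hui)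

lemma box_subset_cube_inter_halfSpace_of_pos (hd : 2 ≤ d) (hz0 : ∀ i, 0 ≤ z i)
    (hz1 : ∀ i, z i ≤ 1) (hu : ∀ i, 0 < u i) {k : Fin d}
    (hk : cubeSide d * u k < ∑ i, u i * z i) :
    Set.Icc 0 (boxSide d z k) ⊆
      Set.Icc 0 (fun _ => cubeSide d) ∩ {w | ∑ i, u i * w i ≤ ∑ i, u i * z i} := by
  have hΔ := one_le_cubeSide (d := d) (by omega)
  have hd2 : (2 : ℝ) ≤ d := by exact_mod_cast hd
  rintro w ⟨hw0, hw⟩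
  have hside := boxSide_le_half_cubeSide (k := k) hd hz1
  refine ⟨⟨hw0, fun i => (hw i).trans ((hside i).trans (by linarith))⟩, ?_⟩
  set s := ∑ i, u i * z i
  have hrest : ∑ i ∈ univ \ {k}, u i * z i ≤ s :=
    sum_le_sum_of_subset_of_nonneg (sdiff_subset : univ \ {k} ⊆ univ) fun i _ _ =>
      mul_nonneg (hu i).le (hz0 i)
  have hspos : 0 < s := lt_of_le_of_lt (by have := hu k; positivity) hk
  calc ∑ i, u i * w i ≤ ∑ i, u i * boxSide d z k i :=
        sum_le_sum fun i _ => mul_le_mul_of_nonneg_left (hw i) (hu i).le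
    _ = (u k * cubeSide d + ∑ i ∈ univ \ {k}, u i * z i) / d := by
        simp only [boxSide, mul_div_assoc', ← sum_div]
        rw [sum_eq_add_sum_sdiff_singleton_of_mem (mem_univ k), Function.update_self]
        congr 2
        exact sum_congr rfl fun i hi => by
          rw [Function.update_of_ne (by simpa using hi)]
    _ ≤ s := by
        rw [div_le_iff₀ (by linarith)]
        nlinarith

lemma ofReal_le_volume_cube_inter_halfSpace (hd : 2 ≤ d) (hz0 : ∀ i, 0 < z i)
    (hz1 : ∀ i, z i ≤ 1 / 2) (u : Fin d → ℝ) :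
    ENNReal.ofReal ((d : ℝ) ^ d / d ! * ∏ i, z i) ≤
      volume (Set.Icc 0 (fun _ => cubeSide d) ∩ {w | ∑ i, u i * w i ≤ ∑ i, u i * z i}) := by
  have hz0' (i : Fin d) : 0 ≤ z i := (hz0 i).le
  have hz1' (i : Fin d) : z i ≤ 1 := (hz1 i).trans (by norm_num)
  by_cases hneg : ∃ k, u k ≤ 0
  · obtain ⟨k, hk⟩ := hneg
    exact ofReal_le_volume_of_box_subset hz0' hz1' _
      (box_subset_cube_inter_halfSpace_of_nonpos hd hz0' hz1 hk)
  push Not at hneg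
  by_cases hsmall : ∀ i, ∑ j, u j * z j ≤ cubeSide d * u i
  · exact (ofReal_le_volume_orthant_inter_halfSpace hneg hz0').trans
      (measure_mono (orthant_inter_halfSpace_subset_cube hneg hsmall))
  push Not at hsmall
  obtain ⟨k, hk⟩ := hsmall
  exact ofReal_le_volume_of_box_subset hz0' hz1' 0
    (by rw [zero_add]; exact box_subset_cube_inter_halfSpace_of_pos hd hz0' hz1' hneg hk)

end halfSpace

lemma floatVal_eq_of_cube_subset {d : ℕ} (hd : 2 ≤ d) {K : Set (Fin d → ℝ)}
    (hcube : Set.Icc 0 (fun _ => cubeSide d) ⊆ K) (hK : ∀ w ∈ K, ∀ i, 0 ≤ w i)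
    {z : Fin d → ℝ} (hz0 : ∀ i, 0 < z i) (hz1 : ∀ i, z i ≤ 1 / 2) :
    floatVal d K z = ENNReal.ofReal ((d : ℝ) ^ d / d ! * ∏ i, z i) := by
  refine le_antisymm (floatVal_le_of_subset_orthant (by omega) hK hz0) ?_
  refine le_iInf₂ fun u _ => le_iInf₂ fun c hc => ?_
  exact (ofReal_le_volume_cube_inter_halfSpace hd hz0 hz1 u).trans
    (measure_mono (Set.inter_subset_inter hcube fun w hw => le_trans hw hc))

/-- There is a constant `Δ_d ∈ [1,∞)`, depending only on `d`, such that whenever `K` is a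
compact convex set with `[0,Δ_d]^d ⊆ K ⊆ [0,M]^d` for some `M ≥ Δ_d`, then for every
`t > 0` the level set `{z ∈ [0,1/2]^d : v_K(z) = t}` is the piece of the
pseudo-hyperboloid `{z : ∏ i, z i = (d!/d^d)·t}` inside `[0,1/2]^d`. -/
theorem statement5 (d : ℕ) (hd : 2 ≤ d) :
    ∃ Δ : ℝ, 1 ≤ Δ ∧
      ∀ K : Set (Fin d → ℝ), IsCompact K → Convex ℝ K →
        Set.Icc (0 : Fin d → ℝ) (fun _ => Δ) ⊆ K →
        (∃ M : ℝ, Δ ≤ M ∧ K ⊆ Set.Icc (0 : Fin d → ℝ) (fun _ => M)) →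
        ∀ t : ℝ, 0 < t →
          {z : Fin d → ℝ | z ∈ Set.Icc (0 : Fin d → ℝ) (fun _ => (1 : ℝ) / 2) ∧
              floatVal d K z = ENNReal.ofReal t} =
          {z : Fin d → ℝ | z ∈ Set.Icc (0 : Fin d → ℝ) (fun _ => (1 : ℝ) / 2) ∧
              ∏ i, z i = ((d.factorial : ℝ) / (d : ℝ) ^ d) * t} := by
  refine ⟨cubeSide d, one_le_cubeSide (by omega), ?_⟩
  rintro K - - hcube ⟨M, -, hKM⟩ t ht
  have hK (w : Fin d → ℝ) (hw : w ∈ K) (i : Fin d) : 0 ≤ w i := (hKM hw).1 i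
  have hconst : (0 : ℝ) < d ! / (d : ℝ) ^ d :=
    div_pos (by positivity) (pow_pos (by exact_mod_cast (by omega : 0 < d)) d)
  ext z
  refine and_congr_right fun ⟨hz0, hz1⟩ => ?_
  by_cases hzpos : ∀ i, 0 < z i
  · have hprod : 0 < ∏ i, z i := prod_pos fun i _ => hzpos i
    rw [floatVal_eq_of_cube_subset hd hcube hK hzpos hz1,
      ENNReal.ofReal_eq_ofReal_iff (by positivity) ht.le, ← inv_div,
      inv_mul_eq_iff_eq_mul₀ hconst.ne']
  · push Not at hzpos
    obtain ⟨i, hi⟩ := hzpos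
    have hzi : z i = 0 := le_antisymm hi (hz0 i)
    rw [floatVal_eq_zero_of_apply_eq_zero (fun w hw => hK w hw i) hzi,
      prod_eq_zero (mem_univ i) hzi]
    exact iff_of_false (ENNReal.ofReal_pos.2 ht).ne (mul_pos hconst ht).ne
end

section
/- Let λ > 0 and z⁰ ∈ (0,∞)^d with T^{(λ)}(z⁰) = (v⁰, h⁰). Then for every z ∈ (0,∞)^d with T^{(λ)}(z) = (v, h), one has ∑_{i=1}^d z⁰_i/z_i ≤ d if and only if h ≥ h⁰ + G(v⁰ − v). That is, T^{(λ)} maps the petal S⁻(z⁰) = {z ∈ (0,∞)^d : ∑ z⁰_i/z_i ≤ d} onto the up cone-like grain Π^↑((v⁰,h⁰)) := {(v,h) ∈ V × ℝ : h ≥ h⁰ + G(v⁰ − v)}. -/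
noncomputable section

/-- The hyperplane `V = {x ∈ ℝ^d : ∑ i, x i = 0}` as a submodule of Euclidean space. -/
def Vsub (d : ℕ) : Submodule ℝ (EuclideanSpace ℝ (Fin d)) where
  carrier := {x | ∑ i, x i = 0}
  add_mem' := by
    intro a b ha hb
    simp only [Set.mem_setOf_eq] at ha hb ⊢
    simp [PiLp.add_apply, Finset.sum_add_distrib, ha, hb]
  zero_mem' := by
    simp only [Set.mem_setOf_eq]
    simp
  smul_mem' := by
    intro c x hx
    simp only [Set.mem_setOf_eq] at hx ⊢
    simp [PiLp.smul_apply, smul_eq_mul, ← Finset.mul_sum, hx]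

/-- The function `G(v) = log((1/d) ∑ i, exp (v i))`. -/
def Gfun (d : ℕ) (v : EuclideanSpace ℝ (Fin d)) : ℝ :=
  Real.log ((1 / (d : ℝ)) * ∑ i, Real.exp (v i))

/-- The scaling transform `T^{(λ)}(z) = (p_V (log z), (1/d)(log λ + ∑ i, log z i))`,
where `p_V` is the orthogonal projection onto the hyperplane `V`. -/
def Tmap (d : ℕ) (lam : ℝ) (z : EuclideanSpace ℝ (Fin d)) : Vsub d × ℝ :=
  ((Vsub d).orthogonalProjectionOnto (WithLp.toLp 2 (fun i => Real.log (z i)) : EuclideanSpace ℝ (Fin d)),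
    (1 / (d : ℝ)) * (Real.log lam + ∑ i, Real.log (z i)))

/-- The inverse scaling transform `U^{(λ)}(v,h) = λ^{-1/d} e^h e^{l(v)}`. -/
def Umap (d : ℕ) (lam : ℝ) (p : Vsub d × ℝ) : EuclideanSpace ℝ (Fin d) :=
  (WithLp.toLp 2 (fun i => lam ^ (-(1 : ℝ) / (d : ℝ)) * Real.exp p.2 *
    Real.exp ((p.1 : EuclideanSpace ℝ (Fin d)) i)) : EuclideanSpace ℝ (Fin d))

end


/-!
Write `m(z)` for the mean of `log z`. Then `p_V(log z)` is `log z - m(z)` coordinatewise, so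
`v⁰ - v = log (z⁰ / z) + (m(z) - m(z⁰))` and, since `G` commutes with adding constants,
`G(v⁰ - v) = log (mean (z⁰ / z)) + m(z) - m(z⁰)`. As `h = (log λ) / d + m(z)`, the inequality
`h⁰ + G(v⁰ - v) ≤ h` collapses to `log (mean (z⁰ / z)) ≤ 0`, i.e. `∑ z⁰ i / z i ≤ d`.
-/

open Finset

lemma orthogonalProjectionOnto_Vsub_apply {d : ℕ} (x : EuclideanSpace ℝ (Fin d)) (i : Fin d) :
    ((Vsub d).orthogonalProjectionOnto x : EuclideanSpace ℝ (Fin d)) i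
      = x i - (∑ j, x j) / d := by
  have hd : (d : ℝ) ≠ 0 := Nat.cast_ne_zero.mpr i.pos.ne'
  let y : EuclideanSpace ℝ (Fin d) := WithLp.toLp 2 fun j => x j - (∑ j, x j) / d
  suffices (Vsub d).starProjection x = y by
    rw [Submodule.coe_orthogonalProjectionOnto_apply, this]
  apply Submodule.eq_starProjection_of_mem_of_inner_eq_zero
  · change ∑ j, (x j - (∑ j, x j) / d) = 0
    rw [sum_sub_distrib, sum_const, card_univ, Fintype.card_fin, nsmul_eq_mul]
    field_simp
    ring
  · intro w (hw : ∑ j, w j = 0)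
    have hxy : ∀ j, (x - y) j = (∑ j, x j) / d := fun j => by simp [y]
    simp only [PiLp.inner_apply, RCLike.inner_apply, conj_trivial, hxy, ← sum_mul, hw, zero_mul]

lemma Tmap_fst_apply {d : ℕ} (lam : ℝ) (z : EuclideanSpace ℝ (Fin d)) (i : Fin d) :
    ((Tmap d lam z).1 : EuclideanSpace ℝ (Fin d)) i
      = Real.log (z i) - (∑ j, Real.log (z j)) / d :=
  orthogonalProjectionOnto_Vsub_apply _ i

lemma Tmap_snd (d : ℕ) (lam : ℝ) (z : EuclideanSpace ℝ (Fin d)) :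
    (Tmap d lam z).2 = Real.log lam / d + (∑ j, Real.log (z j)) / d := by
  simp only [Tmap]
  ring

lemma Tmap_fst_sub_apply {d : ℕ} (lam : ℝ) {z0 z : EuclideanSpace ℝ (Fin d)}
    (hz0 : ∀ i, 0 < z0 i) (hz : ∀ i, 0 < z i) (i : Fin d) :
    ((Tmap d lam z0).1 - (Tmap d lam z).1 : EuclideanSpace ℝ (Fin d)) i
      = Real.log (z0 i / z i)
        + ((∑ j, Real.log (z j)) / d - (∑ j, Real.log (z0 j)) / d) := by
  rw [PiLp.sub_apply, Tmap_fst_apply, Tmap_fst_apply,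
    Real.log_div (hz0 i).ne' (hz i).ne']
  ring

lemma Gfun_eq_log_mean_add {d : ℕ} (hd : 0 < d) {a : Fin d → ℝ} (ha : ∀ i, 0 < a i) (c : ℝ)
    {w : EuclideanSpace ℝ (Fin d)} (hw : ∀ i, w i = Real.log (a i) + c) :
    Gfun d w = Real.log ((1 / (d : ℝ)) * ∑ i, a i) + c := by
  have : Nonempty (Fin d) := ⟨⟨0, hd⟩⟩
  have hmean : 0 < (1 / (d : ℝ)) * ∑ i, a i :=
    mul_pos (by positivity) (sum_pos (fun i _ => ha i) univ_nonempty)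
  simp only [Gfun, hw, Real.exp_add, Real.exp_log (ha _), ← sum_mul, ← mul_assoc]
  rw [Real.log_mul hmean.ne' (Real.exp_ne_zero c), Real.log_exp]

theorem statement11_general (d : ℕ) (hd : 2 ≤ d) (lam : ℝ)
    (z0 : EuclideanSpace ℝ (Fin d)) (hz0 : ∀ i, 0 < z0 i)
    (z : EuclideanSpace ℝ (Fin d)) (hz : ∀ i, 0 < z i) :
    (∑ i, z0 i / z i ≤ (d : ℝ)) ↔
      (Tmap d lam z0).2 +
        Gfun d (((Tmap d lam z0).1 : EuclideanSpace ℝ (Fin d)) -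
          ((Tmap d lam z).1 : EuclideanSpace ℝ (Fin d))) ≤ (Tmap d lam z).2 := by
  have hd0 : 0 < d := by omega
  have hdpos : (0 : ℝ) < d := Nat.cast_pos.mpr hd0
  have hG := Gfun_eq_log_mean_add hd0 (fun i => div_pos (hz0 i) (hz i)) _
    (Tmap_fst_sub_apply lam hz0 hz)
  have hmean : 0 ≤ (1 / (d : ℝ)) * ∑ i, z0 i / z i :=
    mul_nonneg (by positivity) (sum_nonneg fun i _ => (div_pos (hz0 i) (hz i)).le)
  rw [hG, Tmap_snd, Tmap_snd]
  calc (∑ i, z0 i / z i ≤ (d : ℝ))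
      ↔ (1 / (d : ℝ)) * ∑ i, z0 i / z i ≤ 1 := by
        rw [one_div_mul_eq_div, div_le_one hdpos]
    _ ↔ Real.log ((1 / (d : ℝ)) * ∑ i, z0 i / z i) ≤ 0 := (Real.log_nonpos_iff hmean).symm
    _ ↔ _ := by constructor <;> intro h <;> linarith

/-- `T^{(λ)}` maps the petal `S⁻(z⁰) = {z ∈ (0,∞)^d : ∑ i, z⁰ i / z i ≤ d}` onto the
up cone-like grain `Π^↑(T^{(λ)}(z⁰)) = {(v,h) : h ≥ h⁰ + G(v⁰ − v)}`: for
`z, z⁰ ∈ (0,∞)^d` with `T^{(λ)}(z) = (v,h)` and `T^{(λ)}(z⁰) = (v⁰,h⁰)`, one has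
`∑ i, z⁰ i / z i ≤ d ↔ h ≥ h⁰ + G(v⁰ − v)`. -/
theorem statement11 (d : ℕ) (hd : 2 ≤ d) (lam : ℝ) (hlam : 0 < lam)
    (z0 : EuclideanSpace ℝ (Fin d)) (hz0 : ∀ i, 0 < z0 i)
    (z : EuclideanSpace ℝ (Fin d)) (hz : ∀ i, 0 < z i) :
    (∑ i, z0 i / z i ≤ (d : ℝ)) ↔
      (Tmap d lam z0).2 +
        Gfun d (((Tmap d lam z0).1 : EuclideanSpace ℝ (Fin d)) -
          ((Tmap d lam z).1 : EuclideanSpace ℝ (Fin d))) ≤ (Tmap d lam z).2 :=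
  statement11_general d hd lam z0 hz0 z hz
end
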